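/- arXiv:1305.1314 — 5 statements merged into one kernel-verified Lean document; each statement's English description precedes it below -/
import Mathlib

section
/- For all nonnegative integers a, b, c, the product H(a+b) · H(a+c) · H(b+c) divides the product H(a) · H(b) · H(c) · H(a+b+c), where H(n) = ∏_{i=0}^{n-1} i! is the hyperfactorial. In other words, MacMahon's number Mac(a,b,c) = H(a)H(b)H(c)H(a+b+c) / (H(a+b)H(a+c)H(b+c)) is a nonnegative integer. -/
/-- The hyperfactorial `H(n) = ∏_{i=0}^{n-1} i!`. -/
def hyperfac (n : ℕ) : ℕ := ∏ i ∈ Finset.range n, Nat.factorial i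

/-!
By Legendre's formula, `v_p(H(n)) = ∑_{k ≥ 1} F_{p^k}(n)` with `F_m(n) = ∑_{i<n} ⌊i/m⌋`, so it
suffices to show `F(a+b) + F(a+c) + F(b+c) ≤ F(a) + F(b) + F(c) + F(a+b+c)` for each `F = F_m`.
Since `F(n + m) = F(n) + n`, both sides grow by the same amount when one of `a, b, c` is shifted
by `m`, so we may assume `a, b, c < m`; then `F(n) = (n - m) + (n - 2m)` on all arguments involved
and the inequality becomes linear.
-/

open Finset

def sumDiv (m n : ℕ) : ℕ := ∑ i ∈ range n, i / m

lemma sumDiv_eq_zero_of_le {m n : ℕ} (h : n ≤ m) : sumDiv m n = 0 :=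
  sum_eq_zero fun i hi => Nat.div_eq_of_lt (by grind)

lemma sumDiv_add_right {m : ℕ} (hm : 0 < m) (n : ℕ) : sumDiv m (n + m) = sumDiv m n + n := by
  have hshift : ∀ i ∈ range n, (m + i) / m = i / m + 1 := fun i _ => by
    rw [add_comm, Nat.add_div_right _ hm]
  rw [sumDiv, add_comm, sum_range_add, ← sumDiv, sumDiv_eq_zero_of_le le_rfl, zero_add,
    sum_congr rfl hshift, sum_add_distrib, sumDiv, sum_const, card_range, smul_eq_mul, mul_one]

lemma sumDiv_of_le_three_mul {m n : ℕ} (hm : 0 < m) (h : n ≤ 3 * m) :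
    sumDiv m n = (n - m) + (n - 2 * m) := by
  rcases le_or_gt n m with h₁ | h₁
  · rw [sumDiv_eq_zero_of_le h₁]; omega
  rcases le_or_gt n (2 * m) with h₂ | h₂
  · obtain ⟨k, rfl⟩ : ∃ k, n = k + m := ⟨n - m, by omega⟩
    rw [sumDiv_add_right hm, sumDiv_eq_zero_of_le (by omega)]; omega
  · obtain ⟨k, rfl⟩ : ∃ k, n = k + m + m := ⟨n - 2 * m, by omega⟩
    rw [sumDiv_add_right hm, sumDiv_add_right hm, sumDiv_eq_zero_of_le (by omega)]; omega

def MacIneq (F : ℕ → ℕ) (a b c : ℕ) : Prop :=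
  F (a + b) + F (a + c) + F (b + c) ≤ F a + F b + F c + F (a + b + c)

section MacIneq

variable {F : ℕ → ℕ} {a b c : ℕ}

lemma MacIneq.swap_left : MacIneq F a b c ↔ MacIneq F b a c := by
  unfold MacIneq
  rw [add_comm b a]
  omega

lemma MacIneq.swap_right : MacIneq F a b c ↔ MacIneq F a c b := by
  unfold MacIneq
  rw [add_right_comm a c b, add_comm c b]
  omega

end MacIneq

section sumDiv

variable {m a b c : ℕ}

lemma macIneq_sumDiv_add_left_iff (hm : 0 < m) :
    MacIneq (sumDiv m) (a + m) b c ↔ MacIneq (sumDiv m) a b c := by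
  unfold MacIneq
  rw [add_right_comm a m b, add_right_comm a m c, add_right_comm (a + b) m c]
  simp only [sumDiv_add_right hm]
  omega

lemma macIneq_sumDiv_mod_left_iff (hm : 0 < m) :
    MacIneq (sumDiv m) (a % m) b c ↔ MacIneq (sumDiv m) a b c := by
  conv_rhs => rw [← Nat.mod_add_div a m]
  induction a / m with
  | zero => simp
  | succ k ih => rw [Nat.mul_succ, ← add_assoc, macIneq_sumDiv_add_left_iff hm, ih]

lemma macIneq_sumDiv_of_lt (hm : 0 < m) (ha : a < m) (hb : b < m) (hc : c < m) :
    MacIneq (sumDiv m) a b c := by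
  unfold MacIneq
  simp (disch := omega) only [sumDiv_of_le_three_mul hm]
  omega

end sumDiv

lemma macIneq_sumDiv (m a b c : ℕ) : MacIneq (sumDiv m) a b c := by
  rcases m.eq_zero_or_pos with rfl | hm
  · simp [MacIneq, sumDiv]
  rw [← macIneq_sumDiv_mod_left_iff hm, MacIneq.swap_left, ← macIneq_sumDiv_mod_left_iff hm,
    MacIneq.swap_left, MacIneq.swap_right, MacIneq.swap_left, MacIneq.swap_right,
    ← macIneq_sumDiv_mod_left_iff hm]
  exact macIneq_sumDiv_of_lt hm (Nat.mod_lt _ hm) (Nat.mod_lt _ hm) (Nat.mod_lt _ hm)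

lemma hyperfac_ne_zero (n : ℕ) : hyperfac n ≠ 0 :=
  prod_ne_zero_iff.mpr fun i _ => i.factorial_ne_zero

lemma factorization_hyperfac {p : ℕ} (hp : p.Prime) {n B : ℕ} (hn : n ≤ B) :
    (hyperfac n).factorization p = ∑ k ∈ Ico 1 B, sumDiv (p ^ k) n := by
  have hlegendre : ∀ i ∈ range n, (Nat.factorial i).factorization p = ∑ k ∈ Ico 1 B, i / p ^ k :=
    fun i hi => Nat.factorization_factorial hp
      ((Nat.log_le_self p i).trans_lt (by grind))
  rw [hyperfac, Nat.factorization_prod fun i _ => i.factorial_ne_zero, Finsupp.coe_finsetSum,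
    Finset.sum_apply, sum_congr rfl hlegendre, sum_comm]
  rfl

/-- MacMahon's number `Mac(a,b,c)` is an integer: the denominator
`H(a+b)H(a+c)H(b+c)` divides the numerator `H(a)H(b)H(c)H(a+b+c)`. -/
theorem mac_is_integer (a b c : ℕ) :
    hyperfac (a + b) * hyperfac (a + c) * hyperfac (b + c) ∣
      hyperfac a * hyperfac b * hyperfac c * hyperfac (a + b + c) := by
  refine (Nat.factorization_prime_le_iff_dvd (by simp [hyperfac_ne_zero])
    (by simp [hyperfac_ne_zero])).mp fun p hp => ?_
  simp only [Nat.factorization_mul, hyperfac_ne_zero, mul_ne_zero_iff, ne_eq, not_false_eq_true,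
    and_self, Finsupp.add_apply]
  simp (disch := omega) only [factorization_hyperfac hp (B := a + b + c)]
  simpa only [← sum_add_distrib] using sum_le_sum fun k _ => macIneq_sumDiv (p ^ k) a b c
end

section
/- Let K be an infinite field of arbitrary characteristic and let R = K[x,y] be the polynomial ring in two variables. Then every Artinian standard graded quotient R/I by a homogeneous ideal I has the weak Lefschetz property: there exists a linear form ℓ ∈ [R]₁ such that for every integer d, the multiplication map ×ℓ : [R/I]_d → [R/I]_{d+1} has maximal rank (i.e., is injective or surjective). -/
/-!
Let `s` be the least degree of a nonzero form in `I` and `F ∈ I` such a form. Since `K` is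
infinite there is `t` with `F(t, 1) ≠ 0`; take `ℓ = x - t y`, the homogenization of `X - t`.
For `d + 1 < s` there are no nonzero forms of degree `d + 1` in `I`, so `×ℓ` is injective.
For `d + 1 ≥ s`, a form `g` of degree `d + 1` becomes, after subtracting a multiple of
`y ^ (d + 1 - s) * F`, a form vanishing at `(t, 1)`; its dehomogenization has the root `t`,
so it is divisible by `ℓ`, and `×ℓ` is surjective modulo `I`.
-/

open MvPolynomial

namespace MvPolynomial

section Dehomogenize

variable {R : Type*} [CommRing R]

noncomputable def dehomogenize (P : MvPolynomial (Fin 2) R) : Polynomial R :=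
  aeval ![Polynomial.X, 1] P

lemma IsHomogeneous.natDegree_dehomogenize_le {P : MvPolynomial (Fin 2) R} {n : ℕ}
    (hP : P.IsHomogeneous n) : (dehomogenize P).natDegree ≤ n := by
  rw [dehomogenize, P.as_sum, map_sum]
  refine Polynomial.natDegree_sum_le_of_forall_le _ _ fun m hm => ?_
  have hm' : m 0 + m 1 = n := by
    simpa [Finsupp.weight_apply, Finsupp.sum_fintype] using hP (mem_support_iff.mp hm)
  simp only [aeval_monomial, Polynomial.algebraMap_eq, Finsupp.prod_pow, Fin.prod_univ_two,
    Matrix.cons_val_zero, Matrix.cons_val_one, Matrix.cons_val_fin_one, one_pow, mul_one]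
  exact (Polynomial.natDegree_C_mul_X_pow_le _ _).trans (by omega)

lemma IsHomogeneous.homogenize_dehomogenize {P : MvPolynomial (Fin 2) R} {n : ℕ}
    (hP : P.IsHomogeneous n) : (dehomogenize P).homogenize n = P :=
  Polynomial.homogenize_eq_of_isHomogeneous hP rfl

lemma eval_dehomogenize (P : MvPolynomial (Fin 2) R) (t : R) :
    (dehomogenize P).eval t = eval ![t, 1] P := by
  induction P using MvPolynomial.induction_on with
  | C a => simp [dehomogenize]
  | add p q hp hq => simp_all [dehomogenize]
  | mul_X p i hp => fin_cases i <;> simp_all [dehomogenize]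

lemma IsHomogeneous.exists_eq_homogenize_X_sub_C_mul [Nontrivial R] {P : MvPolynomial (Fin 2) R}
    {n : ℕ} (hP : P.IsHomogeneous (n + 1)) {t : R} (ht : eval ![t, 1] P = 0) :
    ∃ f : MvPolynomial (Fin 2) R, f.IsHomogeneous n ∧
      P = (Polynomial.X - Polynomial.C t).homogenize 1 * f := by
  set p := dehomogenize P
  have hp : p.natDegree ≤ n + 1 := hP.natDegree_dehomogenize_le
  have hroot : p.IsRoot t := by rwa [Polynomial.IsRoot, eval_dehomogenize]
  have hq : (p /ₘ (Polynomial.X - Polynomial.C t)).natDegree ≤ n := by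
    rw [Polynomial.natDegree_divByMonic _ (Polynomial.monic_X_sub_C t),
      Polynomial.natDegree_X_sub_C]
    omega
  refine ⟨(p /ₘ (Polynomial.X - Polynomial.C t)).homogenize n,
    Polynomial.isHomogeneous_homogenize _, ?_⟩
  rw [← Polynomial.homogenize_mul _ _ (Polynomial.natDegree_X_sub_C_le t) hq,
    Polynomial.mul_divByMonic_eq_iff_isRoot.mpr hroot, add_comm,
    hP.homogenize_dehomogenize]

lemma IsHomogeneous.exists_eval_ne_zero [IsDomain R] [Infinite R] {P : MvPolynomial (Fin 2) R}
    {n : ℕ} (hP : P.IsHomogeneous n) (hP0 : P ≠ 0) : ∃ t : R, eval ![t, 1] P ≠ 0 := by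
  have hp0 : dehomogenize P ≠ 0 := by
    rintro hp
    rw [← hP.homogenize_dehomogenize, hp, Polynomial.homogenize_zero] at hP0
    exact hP0 rfl
  by_contra! h
  refine hp0 ((dehomogenize P).eq_zero_of_infinite_isRoot ?_)
  simpa [Polynomial.IsRoot, eval_dehomogenize, h] using Set.infinite_univ

end Dehomogenize

lemma mem_of_isHomogeneous_mul_mem {σ R : Type*} [CommRing R] [IsDomain R]
    {I : Ideal (MvPolynomial σ R)} {ℓ f : MvPolynomial σ R} {e d : ℕ}
    (hℓ : ℓ.IsHomogeneous e) (hℓ0 : ℓ ≠ 0)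
    (hI : ∀ G : MvPolynomial σ R, G.IsHomogeneous (e + d) → G ∈ I → G = 0)
    (hf : f.IsHomogeneous d) (h : ℓ * f ∈ I) : f ∈ I := by
  rw [(mul_eq_zero.mp (hI _ (hℓ.mul hf) h)).resolve_left hℓ0]
  exact I.zero_mem

lemma exists_sub_homogenize_X_sub_C_mul_mem {K : Type*} [Field K]
    {I : Ideal (MvPolynomial (Fin 2) K)} {F g : MvPolynomial (Fin 2) K} {s d : ℕ} {t : K}
    (hF : F.IsHomogeneous s) (hFI : F ∈ I) (hFt : eval ![t, 1] F ≠ 0) (hsd : s ≤ d + 1)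
    (hg : g.IsHomogeneous (d + 1)) :
    ∃ f : MvPolynomial (Fin 2) K, f.IsHomogeneous d ∧
      g - (Polynomial.X - Polynomial.C t).homogenize 1 * f ∈ I := by
  set G := C (eval ![t, 1] g / eval ![t, 1] F) * X 1 ^ (d + 1 - s) * F
  have hG : G.IsHomogeneous (d + 1) := by
    simpa [Nat.sub_add_cancel hsd] using ((isHomogeneous_C_mul_X_pow _ 1 (d + 1 - s)).mul hF)
  have hGt : eval ![t, 1] G = eval ![t, 1] g := by simp [G, hFt]
  obtain ⟨f, hf, hgf⟩ := (hg.sub hG).exists_eq_homogenize_X_sub_C_mul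
    (by rw [map_sub, hGt, sub_self])
  refine ⟨f, hf, ?_⟩
  rw [← hgf, sub_sub_cancel]
  exact I.mul_mem_left _ hFI

end MvPolynomial

theorem wlp_two_variables_general (K : Type*) [Field K] [Infinite K]
    (I : Ideal (MvPolynomial (Fin 2) K))
    (hart : ∃ N : ℕ, ∀ d : ℕ, N ≤ d → ∀ f : MvPolynomial (Fin 2) K,
      f.IsHomogeneous d → f ∈ I) :
    ∃ ℓ : MvPolynomial (Fin 2) K, ℓ.IsHomogeneous 1 ∧
      ∀ d : ℕ,
        (∀ f : MvPolynomial (Fin 2) K, f.IsHomogeneous d → ℓ * f ∈ I → f ∈ I) ∨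
        (∀ g : MvPolynomial (Fin 2) K, g.IsHomogeneous (d + 1) →
          ∃ f : MvPolynomial (Fin 2) K, f.IsHomogeneous d ∧ g - ℓ * f ∈ I) := by
  classical
  obtain ⟨N, hN⟩ := hart
  have hex : ∃ s, ∃ F : MvPolynomial (Fin 2) K, F ≠ 0 ∧ F.IsHomogeneous s ∧ F ∈ I :=
    ⟨N, X 0 ^ N, pow_ne_zero _ (X_ne_zero _), isHomogeneous_X_pow 0 N,
      hN N le_rfl _ (isHomogeneous_X_pow 0 N)⟩
  obtain ⟨F, hF0, hF, hFI⟩ := Nat.find_spec hex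
  obtain ⟨t, ht⟩ := hF.exists_eval_ne_zero hF0
  have hℓ0 : (Polynomial.X - Polynomial.C t).homogenize 1 ≠ 0 := by
    rw [Ne, Polynomial.homogenize_eq_zero_iff (Polynomial.natDegree_X_sub_C_le t)]
    exact Polynomial.X_sub_C_ne_zero t
  refine ⟨(Polynomial.X - Polynomial.C t).homogenize 1, Polynomial.isHomogeneous_homogenize _,
    fun d => ?_⟩
  rcases lt_or_ge (d + 1) (Nat.find hex) with hd | hd
  · refine .inl fun f hf => mem_of_isHomogeneous_mul_mem (Polynomial.isHomogeneous_homogenize _)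
      hℓ0 (fun G hG hGI => ?_) hf
    by_contra hG0
    exact Nat.find_min hex (by omega) ⟨G, hG0, hG, hGI⟩
  · exact .inr fun g hg => exists_sub_homogenize_X_sub_C_mul_mem hF hFI ht hd hg

/-- Every Artinian standard graded quotient of `K[x,y]`, `K` an infinite field of
arbitrary characteristic, has the weak Lefschetz property: there is a linear
form `ℓ` such that for all `d` the multiplication `×ℓ : [R/I]_d → [R/I]_{d+1}`
is injective or surjective. -/
theorem wlp_two_variables (K : Type*) [Field K] [Infinite K]
    (I : Ideal (MvPolynomial (Fin 2) K))
    (hhom : ∀ f ∈ I, ∀ d : ℕ, homogeneousComponent d f ∈ I)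
    (hart : ∃ N : ℕ, ∀ d : ℕ, N ≤ d → ∀ f : MvPolynomial (Fin 2) K,
      f.IsHomogeneous d → f ∈ I) :
    ∃ ℓ : MvPolynomial (Fin 2) K, ℓ.IsHomogeneous 1 ∧
      ∀ d : ℕ,
        (∀ f : MvPolynomial (Fin 2) K, f.IsHomogeneous d → ℓ * f ∈ I → f ∈ I) ∨
        (∀ g : MvPolynomial (Fin 2) K, g.IsHomogeneous (d + 1) →
          ∃ f : MvPolynomial (Fin 2) K, f.IsHomogeneous d ∧ g - ℓ * f ∈ I) :=
  wlp_two_variables_general K I hart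
end

section
/- Let a₁ > a₂ ≥ 0, b₂ > b₁ ≥ 0, c ≥ 0 be integers. Then in the polynomial ring K[x,y,z] over a field K, the intersection of monomial ideals satisfies (x^{a₁+1}, y^{b₁+1}, z^{c+1}) ∩ (x^{a₂+1}, y^{b₂+1}, z^{c+1}) = (x^{a₁+1}, y^{b₂+1}, z^{c+1}, x^{a₂+1} y^{b₁+1}). -/
/-!
A polynomial lies in a monomial ideal iff each monomial of its support is divisible by a
generator, so the intersection of two monomial ideals is generated by the lcms of pairs of
generators, one from each ideal. For the two ideals at hand these nine lcms are, up to
redundant ones, `x^{a₁+1}` (since `a₂ < a₁`), `y^{b₂+1}` (since `b₁ < b₂`), `z^{c+1}` and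
the mixed monomial `lcm(y^{b₁+1}, x^{a₂+1}) = x^{a₂+1} y^{b₁+1}`.
-/

open MvPolynomial

namespace MvPolynomial

variable {σ R : Type*} [CommSemiring R]

theorem span_monomial_image_mono {s t : Set (σ →₀ ℕ)} (h : ∀ x ∈ s, ∃ y ∈ t, y ≤ x) :
    Ideal.span ((fun s => monomial s (1 : R)) '' s) ≤
      Ideal.span ((fun s => monomial s (1 : R)) '' t) := by
  refine Ideal.span_le.2 ?_
  rintro _ ⟨x, hx, rfl⟩
  refine mem_ideal_span_monomial_image.2 fun xi hxi => ?_
  rw [Finset.mem_singleton.1 (support_monomial_subset hxi)]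
  exact h x hx

theorem span_monomial_image_inf (s t : Set (σ →₀ ℕ)) :
    Ideal.span ((fun s => monomial s (1 : R)) '' s) ⊓
        Ideal.span ((fun s => monomial s (1 : R)) '' t) =
      Ideal.span ((fun s => monomial s (1 : R)) '' Set.image2 (· ⊔ ·) s t) := by
  ext p
  simp only [Ideal.mem_inf, mem_ideal_span_monomial_image, ← forall₂_and]
  refine forall₂_congr fun xi _ => ⟨?_, ?_⟩
  · rintro ⟨⟨a, ha, hax⟩, b, hb, hbx⟩
    exact ⟨a ⊔ b, Set.mem_image2_of_mem ha hb, sup_le hax hbx⟩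
  · rintro ⟨_, ⟨a, ha, b, hb, rfl⟩, habx⟩
    exact ⟨⟨a, ha, le_sup_left.trans habx⟩, b, hb, le_sup_right.trans habx⟩

end MvPolynomial

theorem Finsupp.single_add_single_eq_sup {ι : Type*} {i j : ι} (hij : i ≠ j) (a b : ℕ) :
    single i a + single j b = single i a ⊔ single j b := by
  ext k
  by_cases hki : k = i
  · subst hki; simp [hij]
  · by_cases hkj : k = j
    · subst hkj; simp [hki]
    · simp [hki, hkj]

open Finsupp in
theorem span_monomial_image2_sup_eq_four_gens (R : Type*) [CommSemiring R]
    {a₁ a₂ b₁ b₂ : ℕ} (c : ℕ) (ha : a₂ < a₁) (hb : b₁ < b₂) :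
    Ideal.span ((fun s => monomial s (1 : R)) '' Set.image2 (· ⊔ ·)
        {single (0 : Fin 3) (a₁ + 1), single 1 (b₁ + 1), single 2 (c + 1)}
        {single 0 (a₂ + 1), single 1 (b₂ + 1), single 2 (c + 1)}) =
      Ideal.span ((fun s => monomial s (1 : R)) ''
        {single 0 (a₁ + 1), single 1 (b₂ + 1), single 2 (c + 1),
          single 0 (a₂ + 1) + single 1 (b₁ + 1)}) := by
  apply le_antisymm <;> apply span_monomial_image_mono
  · rintro _ ⟨s, hs, t, ht, rfl⟩
    simp only [Set.mem_insert_iff, Set.mem_singleton_iff] at hs ht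
    rcases hs with rfl | rfl | rfl <;> rcases ht with rfl | rfl | rfl
    all_goals first
      | (refine ⟨_, ?_, le_sup_left⟩
         simp only [Set.mem_insert_iff, Set.mem_singleton_iff, true_or, or_true]; done)
      | (refine ⟨_, ?_, le_sup_right⟩
         simp only [Set.mem_insert_iff, Set.mem_singleton_iff, true_or, or_true]; done)
      | exact ⟨_, Set.mem_insert_of_mem _ <| Set.mem_insert_of_mem _ <| Set.mem_insert_of_mem _ rfl,
          (single_add_single_eq_sup (by decide) _ _).trans_le (sup_comm _ _).le⟩
  · simp only [Set.forall_mem_insert, Set.mem_singleton_iff, forall_eq]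
    refine ⟨⟨single 0 (a₁ + 1) ⊔ single 0 (a₂ + 1), Set.mem_image2_of_mem ?_ ?_,
        sup_le le_rfl (single_mono (by omega))⟩,
      ⟨single 1 (b₁ + 1) ⊔ single 1 (b₂ + 1), Set.mem_image2_of_mem ?_ ?_,
        sup_le (single_mono (by omega)) le_rfl⟩,
      ⟨single 2 (c + 1) ⊔ single 2 (c + 1), Set.mem_image2_of_mem ?_ ?_, sup_le le_rfl le_rfl⟩,
      ⟨single 1 (b₁ + 1) ⊔ single 0 (a₂ + 1), Set.mem_image2_of_mem ?_ ?_,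
        sup_le le_add_self le_self_add⟩⟩
    all_goals simp only [Set.mem_insert_iff, Set.mem_singleton_iff, true_or, or_true]

/-- For `a₁ > a₂ ≥ 0`, `b₂ > b₁ ≥ 0`, `c ≥ 0` in `K[x,y,z]`:
`(x^{a₁+1}, y^{b₁+1}, z^{c+1}) ∩ (x^{a₂+1}, y^{b₂+1}, z^{c+1})
  = (x^{a₁+1}, y^{b₂+1}, z^{c+1}, x^{a₂+1} y^{b₁+1})`. -/
theorem monomial_ideal_intersection_four_gens (K : Type*) [Field K]
    (a₁ a₂ b₁ b₂ c : ℕ) (ha : a₂ < a₁) (hb : b₁ < b₂) :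
    (Ideal.span {(X 0 : MvPolynomial (Fin 3) K) ^ (a₁ + 1), X 1 ^ (b₁ + 1),
        X 2 ^ (c + 1)} ⊓
      Ideal.span {(X 0 : MvPolynomial (Fin 3) K) ^ (a₂ + 1), X 1 ^ (b₂ + 1),
        X 2 ^ (c + 1)}) =
    Ideal.span {(X 0 : MvPolynomial (Fin 3) K) ^ (a₁ + 1), X 1 ^ (b₂ + 1),
      X 2 ^ (c + 1), X 0 ^ (a₂ + 1) * X 1 ^ (b₁ + 1)} := by
  have h := span_monomial_image2_sup_eq_four_gens K c ha hb
  rw [← span_monomial_image_inf] at h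
  simpa only [Set.image_insert_eq, Set.image_singleton, X_pow_eq_monomial, monomial_mul,
    one_mul] using h
end

section
/- Let a₁ > a₂ ≥ 0, b₂ > b₁ ≥ 0, c₂ > c₁ ≥ 0 be integers. Then in K[x,y,z]: (x^{a₁+1}, y^{b₁+1}, z^{c₁+1}) ∩ (x^{a₂+1}, y^{b₂+1}, z^{c₂+1}) = (x^{a₁+1}, y^{b₂+1}, z^{c₂+1}, x^{a₂+1} y^{b₁+1}, x^{a₂+1} z^{c₁+1}). -/
/-!
A polynomial lies in a monomial ideal iff every monomial of its support is divisible by one of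
the generators. Hence the intersection of two monomial ideals is the monomial ideal of the
exponent vectors dominating a generator of each, and the identity reduces to a comparison of
exponents, settled by linear arithmetic.
-/

open MvPolynomial

theorem Finsupp.single_add_single_le_iff {ι α : Type*} [AddCommMonoid α] [PartialOrder α]
    [CanonicallyOrderedAdd α] {i j : ι} (hij : i ≠ j) {p q : α} {d : ι →₀ α} :
    single i p + single j q ≤ d ↔ p ≤ d i ∧ q ≤ d j := by
  refine ⟨fun h => ⟨?_, ?_⟩, fun ⟨hi, hj⟩ k => ?_⟩
  · simpa [hij.symm] using h i
  · simpa [hij] using h j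
  · by_cases hki : k = i
    · subst hki
      simpa [hij] using hi
    · by_cases hkj : k = j
      · subst hkj
        simpa [hki] using hj
      · simp [Ne.symm hki, Ne.symm hkj]

theorem MvPolynomial.span_monomial_image_inf_span_monomial_image {σ R : Type*} [CommSemiring R]
    {s t u : Set (σ →₀ ℕ)}
    (h : ∀ d, ((∃ a ∈ s, a ≤ d) ∧ ∃ b ∈ t, b ≤ d) ↔ ∃ c ∈ u, c ≤ d) :
    Ideal.span ((fun a => monomial a (1 : R)) '' s) ⊓
        Ideal.span ((fun b => monomial b (1 : R)) '' t) =
      Ideal.span ((fun c => monomial c (1 : R)) '' u) := by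
  ext f
  simp only [Ideal.mem_inf, mem_ideal_span_monomial_image, ← h]
  exact ⟨fun ⟨hs, ht⟩ d hd => ⟨hs d hd, ht d hd⟩,
    fun H => ⟨fun d hd => (H d hd).1, fun d hd => (H d hd).2⟩⟩

/-- For `a₁ > a₂ ≥ 0`, `b₂ > b₁ ≥ 0`, `c₂ > c₁ ≥ 0` in `K[x,y,z]`:
`(x^{a₁+1}, y^{b₁+1}, z^{c₁+1}) ∩ (x^{a₂+1}, y^{b₂+1}, z^{c₂+1})
  = (x^{a₁+1}, y^{b₂+1}, z^{c₂+1}, x^{a₂+1} y^{b₁+1}, x^{a₂+1} z^{c₁+1})`. -/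
theorem monomial_ideal_intersection_five_gens (K : Type*) [Field K]
    (a₁ a₂ b₁ b₂ c₁ c₂ : ℕ) (ha : a₂ < a₁) (hb : b₁ < b₂) (hc : c₁ < c₂) :
    (Ideal.span {(X 0 : MvPolynomial (Fin 3) K) ^ (a₁ + 1), X 1 ^ (b₁ + 1),
        X 2 ^ (c₁ + 1)} ⊓
      Ideal.span {(X 0 : MvPolynomial (Fin 3) K) ^ (a₂ + 1), X 1 ^ (b₂ + 1),
        X 2 ^ (c₂ + 1)}) =
    Ideal.span {(X 0 : MvPolynomial (Fin 3) K) ^ (a₁ + 1), X 1 ^ (b₂ + 1),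
      X 2 ^ (c₂ + 1), X 0 ^ (a₂ + 1) * X 1 ^ (b₁ + 1),
      X 0 ^ (a₂ + 1) * X 2 ^ (c₁ + 1)} := by
  open Finsupp in
  have key := span_monomial_image_inf_span_monomial_image (σ := Fin 3) (R := K)
    (s := {single 0 (a₁ + 1), single 1 (b₁ + 1), single 2 (c₁ + 1)})
    (t := {single 0 (a₂ + 1), single 1 (b₂ + 1), single 2 (c₂ + 1)})
    (u := {single 0 (a₁ + 1), single 1 (b₂ + 1), single 2 (c₂ + 1),
      single 0 (a₂ + 1) + single 1 (b₁ + 1), single 0 (a₂ + 1) + single 2 (c₁ + 1)})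
    fun d => by
      simp only [Set.mem_insert_iff, Set.mem_singleton_iff, exists_eq_or_imp, exists_eq_left,
        single_le_iff, single_add_single_le_iff (show (0 : Fin 3) ≠ 1 by decide),
        single_add_single_le_iff (show (0 : Fin 3) ≠ 2 by decide)]
      omega
  simpa only [Set.image_insert_eq, Set.image_singleton, X_pow_eq_monomial, monomial_mul,
    one_mul] using key
end

section
/- Let p, q, n be nonnegative integers with n ≥ 1, and let M be the n×n matrix over the rationals with entries M_{i,j} = C(p, q + j − i) (binomial coefficient, taken to be 0 when q + j − i < 0 or q + j − i > p). Then det M = Mac(n, p−q, q) = H(n)·H(p−q)·H(q)·H(n+p) / (H(n+p−q)·H(n+q)·H(p)), provided q ≤ p. -/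
/-!
Multiplying row `i` of the `(m+1) × (m+1)` matrix by `(q+m-i)! (p-q+i)! / p!` turns the entry
`C(p, q+j-i)` into the product of falling factorials `(q+m-i)_(m-j) · (p-q+i)_j`, which vanishes
exactly where the binomial coefficient is out of range. The two arguments always add up to `p+m`,
so adding each column to the next strips one linear factor in `p-q+i` from every column to the
right of the current one, at the price of a constant `p+1+k`. After `m` rounds only the factors
`(q+m-i)_(m-j)` remain: up to reversing rows and columns this is a Vandermonde matrix in the
monic basis `(X+q)_j`, of determinant `H(m+1)`. The factorials collected on the way assemble into
hyperfactorials.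
-/

open Finset Matrix Polynomial
open scoped Nat

lemma hyperfac_add (a n : ℕ) : hyperfac (a + n) = hyperfac a * ∏ i ∈ range n, (a + i)! :=
  prod_range_add _ a n

lemma prod_range_factorial_add (p m : ℕ) :
    ∏ i ∈ range (m + 1), (p + i)! =
      p ! ^ (m + 1) * ∏ k ∈ range m, (p + 1 + k) ^ (m - k) := by
  induction m with
  | zero => simp
  | succ m ih =>
    have hpow : ∏ k ∈ range (m + 1), (p + 1 + k) ^ (m + 1 - k)
        = (∏ k ∈ range m, (p + 1 + k) ^ (m - k)) * (p + 1).ascFactorial (m + 1) := by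
      have hlast : ∏ k ∈ range (m + 1), (p + 1 + k) ^ (m - k) =
          ∏ k ∈ range m, (p + 1 + k) ^ (m - k) := by
        rw [prod_range_succ, Nat.sub_self, pow_zero, mul_one]
      rw [Nat.ascFactorial_eq_prod_range, ← hlast, ← prod_mul_distrib]
      refine prod_congr rfl fun k hk => ?_
      rw [← pow_succ, Nat.sub_add_comm (Nat.le_of_lt_succ (mem_range.mp hk))]
    rw [prod_range_succ, ih, hpow, ← Nat.factorial_mul_ascFactorial]
    ring

lemma factorial_add_mul_factorial_add_mul_choose {p r : ℕ} (hr : r ≤ p) (k l : ℕ) :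
    (r + k)! * (p - r + l)! * p.choose r =
      p ! * ((r + k).descFactorial k * (p - r + l).descFactorial l) := by
  rw [← Nat.choose_mul_factorial_mul_factorial hr,
    ← Nat.factorial_mul_descFactorial (Nat.le_add_left k r),
    ← Nat.factorial_mul_descFactorial (Nat.le_add_left l (p - r)),
    Nat.add_sub_cancel, Nat.add_sub_cancel]
  ring

section ColumnReduction

variable {R : Type*} [CommRing R] {m : ℕ} (u v : Fin (m + 1) → R)

/-- The matrix after `k` rounds of column reduction: column `j` has lost its last `min j k`
factors in `v`. -/
noncomputable def descPochhammerProductMatrix (k : ℕ) : Matrix (Fin (m + 1)) (Fin (m + 1)) R :=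
  of fun i j => (descPochhammer R (m - j)).eval (u i) * (descPochhammer R (j - k)).eval (v i)

variable {u v} {s : R}

lemma det_descPochhammerProductMatrix_succ (huv : ∀ i, u i + v i = s) (k : ℕ) :
    (descPochhammerProductMatrix u v k).det =
      (s - m + 1 + k) ^ (m - k) * (descPochhammerProductMatrix u v (k + 1)).det := by
  set c : R := s - m + 1 + k
  have hcol : (descPochhammerProductMatrix u v k).det =
      (of fun i j : Fin (m + 1) => (if k < (j : ℕ) then c else 1) *
        descPochhammerProductMatrix u v (k + 1) i j).det := by
    refine det_eq_of_forall_col_eq_smul_add_pred (fun j => if k ≤ (j : ℕ) then -1 else 0) ?_ ?_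
    · intro i
      simp [descPochhammerProductMatrix]
    · intro i j
      simp only [descPochhammerProductMatrix, of_apply, Fin.val_succ, Fin.val_castSucc]
      by_cases hkj : k ≤ (j : ℕ)
      · obtain ⟨d, hd⟩ : ∃ d, m - j = d + 1 := ⟨m - j - 1, by omega⟩
        have hdR : (d : R) + 1 + (j : ℕ) = m := by
          exact_mod_cast congrArg (Nat.cast (R := R)) (show d + 1 + (j : ℕ) = m by omega)
        rw [if_pos (Nat.lt_succ_of_le hkj), if_pos hkj, hd, Nat.sub_add_comm hkj,
          show (j : ℕ) + 1 - (k + 1) = j - k by omega, show m - ((j : ℕ) + 1) = d by omega,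
          descPochhammer_succ_eval, descPochhammer_succ_eval, Nat.cast_sub hkj]
        set P := (descPochhammer R d).eval (u i) * (descPochhammer R (j - k)).eval (v i)
        linear_combination P * huv i - P * hdR
      · rw [if_neg (by omega), if_neg hkj, show (j : ℕ) + 1 - k = 0 by omega,
          show (j : ℕ) + 1 - (k + 1) = 0 by omega]
        ring
  rw [hcol, det_mul_row, Fin.prod_univ_eq_prod_range (fun j => if k < j then c else 1),
    prod_ite, prod_const, prod_const_one, mul_one,
    show {j ∈ range (m + 1) | k < j} = Ioo k (m + 1) by ext; simp [and_comm],
    Nat.card_Ioo, Nat.sub_right_comm, Nat.add_sub_cancel]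

lemma det_descPochhammerProductMatrix_zero (huv : ∀ i, u i + v i = s) (t : ℕ) :
    (descPochhammerProductMatrix u v 0).det =
      (∏ k ∈ range t, (s - m + 1 + k) ^ (m - k)) * (descPochhammerProductMatrix u v t).det := by
  induction t with
  | zero => simp
  | succ t ih => rw [ih, det_descPochhammerProductMatrix_succ huv, prod_range_succ, mul_assoc]

theorem det_descPochhammer_mul_descPochhammer (huv : ∀ i, u i + v i = s) :
    (of fun i j : Fin (m + 1) =>
        (descPochhammer R (m - j)).eval (u i) * (descPochhammer R j).eval (v i)).det =
      (∏ k ∈ range m, (s - m + 1 + k) ^ (m - k)) *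
        (of fun i j : Fin (m + 1) => (descPochhammer R (m - j)).eval (u i)).det := by
  have hlast : descPochhammerProductMatrix u v m =
      of fun i (j : Fin (m + 1)) => (descPochhammer R (m - j)).eval (u i) := by
    ext i j
    simp [descPochhammerProductMatrix, Nat.sub_eq_zero_of_le (Fin.is_le j)]
  rw [← hlast, ← det_descPochhammerProductMatrix_zero huv]
  rfl

end ColumnReduction

section Vandermonde

variable {R : Type*} [CommRing R] [IsDomain R] (a : R) (m : ℕ)

theorem det_descPochhammer_eval_add_natCast :
    (of fun i j : Fin (m + 1) => (descPochhammer R j).eval (a + i)).det = m.superFactorial := by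
  have hdeg (j : Fin (m + 1)) : ((descPochhammer R j).comp (X + C a)).natDegree = j := by
    rw [natDegree_comp, descPochhammer_natDegree, natDegree_X_add_C, mul_one]
  rw [← det_vandermonde_id_eq_superFactorial,
    det_eval_matrixOfPolynomials_eq_det_vandermonde _ _ hdeg
      fun j => (monic_descPochhammer R j).comp_X_add_C a]
  simp [add_comm]

theorem det_descPochhammer_eval_add_sub :
    (of fun i j : Fin (m + 1) => (descPochhammer R (m - j)).eval (a + (m - (i : ℕ) : ℕ))).det =
      m.superFactorial := by
  rw [← det_descPochhammer_eval_add_natCast a m, ← det_submatrix_equiv_self Fin.revPerm]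
  congr 1
  ext i j
  rw [submatrix_apply, of_apply, of_apply, Fin.revPerm_apply, Fin.revPerm_apply, Fin.val_rev,
    Fin.val_rev, Nat.add_sub_add_right, Nat.add_sub_add_right, Nat.sub_sub_self (Fin.is_le i),
    Nat.sub_sub_self (Fin.is_le j)]

end Vandermonde

def binomialMatrix (n p q : ℕ) : Matrix (Fin n) (Fin n) ℚ :=
  of fun i j =>
    if (i : ℕ) ≤ q + (j : ℕ) then (Nat.choose p (q + (j : ℕ) - (i : ℕ)) : ℚ) else 0

lemma factorial_mul_factorial_mul_binomialMatrix {m p q : ℕ} (hq : q ≤ p) (i j : Fin (m + 1)) :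
    ((q + (m - (i : ℕ)))! * (p - q + (i : ℕ))! : ℚ) * binomialMatrix (m + 1) p q i j =
      p ! * ((descPochhammer ℚ (m - (j : ℕ))).eval ((q : ℚ) + (m - (i : ℕ) : ℕ)) *
        (descPochhammer ℚ (j : ℕ)).eval ((p - q + (i : ℕ) : ℕ) : ℚ)) := by
  rw [← Nat.cast_add, descPochhammer_eval_eq_descFactorial, descPochhammer_eval_eq_descFactorial,
    binomialMatrix, of_apply]
  split_ifs with hij
  · by_cases hp : q + (j : ℕ) - i ≤ p
    · have h := factorial_add_mul_factorial_add_mul_choose hp (m - j) j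
      rw [show q + (j : ℕ) - i + (m - j) = q + (m - i) by omega,
        show p - (q + (j : ℕ) - i) + j = p - q + i by omega] at h
      exact_mod_cast h
    · rw [Nat.choose_eq_zero_of_lt (not_le.mp hp),
        Nat.descFactorial_eq_zero_iff_lt.2 (show p - q + i < j by omega)]
      simp
  · rw [Nat.descFactorial_eq_zero_iff_lt.2 (show q + (m - i) < m - j by omega)]
    simp

theorem prod_factorial_mul_det_binomialMatrix {p q : ℕ} (hq : q ≤ p) (m : ℕ) :
    (∏ i ∈ range (m + 1), ((q + i)! : ℚ)) * (∏ i ∈ range (m + 1), ((p - q + i)! : ℚ)) *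
        (binomialMatrix (m + 1) p q).det =
      m.superFactorial * ∏ i ∈ range (m + 1), ((p + i)! : ℚ) := by
  let w (i : Fin (m + 1)) : ℚ := (q + (m - (i : ℕ)))! * (p - q + (i : ℕ))!
  have huv (i : Fin (m + 1)) :
      ((q : ℚ) + (m - (i : ℕ) : ℕ)) + ((p - q + (i : ℕ) : ℕ) : ℚ) =
        ((p + m : ℕ) : ℚ) := by
    norm_cast
    omega
  have hscaled : (of fun i j => w i * binomialMatrix (m + 1) p q i j) =
      (p ! : ℚ) • of fun i j : Fin (m + 1) =>
        (descPochhammer ℚ (m - (j : ℕ))).eval ((q : ℚ) + (m - (i : ℕ) : ℕ)) *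
          (descPochhammer ℚ (j : ℕ)).eval ((p - q + (i : ℕ) : ℕ) : ℚ) := by
    ext i j
    exact factorial_mul_factorial_mul_binomialMatrix hq i j
  have hw : ∏ i, w i = (∏ i ∈ range (m + 1), ((q + i)! : ℚ)) *
      ∏ i ∈ range (m + 1), ((p - q + i)! : ℚ) := by
    rw [Fin.prod_univ_eq_prod_range (fun i => ((q + (m - i))! * (p - q + i)! : ℚ)),
      prod_mul_distrib, ← prod_range_reflect (fun i => ((q + i)! : ℚ))]
    simp
  have hp : ∏ i ∈ range (m + 1), ((p + i)! : ℚ) =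
      p ! ^ (m + 1) * ∏ k ∈ range m, (((p + m : ℕ) : ℚ) - m + 1 + k) ^ (m - k) := by
    rw [← Nat.cast_prod, prod_range_factorial_add]
    push_cast
    ring_nf
  have hdet := det_mul_column w (binomialMatrix (m + 1) p q)
  rw [hscaled, det_smul, Fintype.card_fin, det_descPochhammer_mul_descPochhammer huv,
    det_descPochhammer_eval_add_sub, hw] at hdet
  rw [← hdet, hp]
  ring

/-- The determinant of the `n × n` matrix with entries `C(p, q + j − i)`
(interpreted as `0` when `q + j − i < 0`, and automatically `0` when
`q + j − i > p`) equals `Mac(n, p−q, q)`, provided `q ≤ p` and `n ≥ 1`. -/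
theorem det_binomial_matrix (n p q : ℕ) (hn : 1 ≤ n) (hq : q ≤ p) :
    (Matrix.of fun i j : Fin n =>
        if (i : ℕ) ≤ q + (j : ℕ)
          then (Nat.choose p (q + (j : ℕ) - (i : ℕ)) : ℚ)
          else 0).det =
      (hyperfac n * hyperfac (p - q) * hyperfac q * hyperfac (n + p) : ℚ) /
        (hyperfac (n + p - q) * hyperfac (n + q) * hyperfac p : ℚ) := by
  obtain ⟨m, rfl⟩ : ∃ m, n = m + 1 := ⟨n - 1, by omega⟩
  change (binomialMatrix (m + 1) p q).det = _
  have hne (k : ℕ) : (hyperfac k : ℚ) ≠ 0 :=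
    Nat.cast_ne_zero.2 (prod_ne_zero_iff.2 fun i _ => Nat.factorial_ne_zero i)
  rw [eq_div_iff (mul_ne_zero (mul_ne_zero (hne _) (hne _)) (hne _)),
    show hyperfac (m + 1) = m.superFactorial from Nat.prod_range_succ_factorial m,
    show m + 1 + p - q = p - q + (m + 1) by omega, add_comm (m + 1) q, add_comm (m + 1) p,
    hyperfac_add (p - q), hyperfac_add q, hyperfac_add p]
  push_cast
  linear_combination (hyperfac (p - q) * hyperfac q * hyperfac p : ℚ) *
    prod_factorial_mul_det_binomialMatrix hq m
end
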